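/- For every x ∈ [278/665, 34/81), one has σ²(x) < σ²(c). -/

import Mathlib

open scoped BigOperators

/-- `V x ξ = min x ξ - x * ξ`. -/
noncomputable def V (x ξ : ℝ) : ℝ := min x ξ - x * ξ

/-- `σ²(x) = V(⟨x⟩, ⟨x⟩) + 2 ∑_{k=1}^∞ 6^{-k} V(⟨2^k x⟩, ⟨3^k x⟩)`. -/
noncomputable def sigmaSq (x : ℝ) : ℝ :=
  V (Int.fract x) (Int.fract x) +
    2 * ∑' k : ℕ, (1 / 6 ^ (k + 1) : ℝ) *
      V (Int.fract ((2 : ℝ) ^ (k + 1) * x)) (Int.fract ((3 : ℝ) ^ (k + 1) * x))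

/-- `c = 277/665 = 277/(3^6 - 2^6)`. -/
noncomputable def c : ℝ := 277 / 665

/-! The series is cut after its sixth term: `V ≤ 1/4` bounds the remainder by `2 · 6⁻⁵ / 20`,
while on `[c, 34/81)` the first six terms are an explicit piecewise quadratic in `x`. On
`[278/665, 34/81)` that quadratic stays below its value at `c` by more than the remainder bound. -/

lemma Int.fract_eq_sub_of_mem_Ico {R : Type*} [Ring R] [LinearOrder R] [FloorRing R] {a : R}
    {n : ℤ} (h : a ∈ Set.Ico (n : R) (n + 1)) : Int.fract a = a - n := by
  rw [Int.fract, Int.floor_eq_iff.mpr h]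

lemma V_nonneg {a b : ℝ} (ha : 0 ≤ a) (hb : 0 ≤ b) (ha₁ : a ≤ 1) (hb₁ : b ≤ 1) :
    0 ≤ V a b := by
  rcases le_total a b with h | h
  · rw [V, min_eq_left h]; nlinarith
  · rw [V, min_eq_right h]; nlinarith

lemma V_le_one_fourth {a b : ℝ} (ha : 0 ≤ a) (hb : 0 ≤ b) : V a b ≤ 1 / 4 := by
  rcases le_total a b with h | h
  · rw [V, min_eq_left h]; nlinarith [sq_nonneg (2 * a - 1)]
  · rw [V, min_eq_right h]; nlinarith [sq_nonneg (2 * b - 1)]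

noncomputable def sigmaSqTerm (x : ℝ) (k : ℕ) : ℝ :=
  (1 / 6 ^ (k + 1) : ℝ) *
    V (Int.fract ((2 : ℝ) ^ (k + 1) * x)) (Int.fract ((3 : ℝ) ^ (k + 1) * x))

lemma sigmaSqTerm_nonneg (x : ℝ) (k : ℕ) : 0 ≤ sigmaSqTerm x k :=
  mul_nonneg (by positivity) (V_nonneg (Int.fract_nonneg _) (Int.fract_nonneg _)
    (Int.fract_lt_one _).le (Int.fract_lt_one _).le)

lemma sigmaSqTerm_le (x : ℝ) (k : ℕ) : sigmaSqTerm x k ≤ (1 / 6) ^ (k + 1) / 4 := by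
  rw [sigmaSqTerm, one_div_pow, div_eq_mul_one_div _ 4]
  exact mul_le_mul_of_nonneg_left (V_le_one_fourth (Int.fract_nonneg _) (Int.fract_nonneg _))
    (by positivity)

lemma hasSum_one_sixth_pow_div_four (n : ℕ) :
    HasSum (fun k : ℕ => (1 / 6 : ℝ) ^ (k + n + 1) / 4) ((1 / 6) ^ n / 20) := by
  have h := (hasSum_geometric_of_lt_one (r := (1 / 6 : ℝ)) (by norm_num) (by norm_num)).mul_left
    ((1 / 6) ^ (n + 1) / 4)
  rw [show (1 / 6 : ℝ) ^ n / 20 = (1 / 6) ^ (n + 1) / 4 * (1 - 1 / 6)⁻¹ by ring]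
  exact h.congr_fun fun k => by ring

lemma summable_sigmaSqTerm (x : ℝ) : Summable (sigmaSqTerm x) :=
  Summable.of_nonneg_of_le (sigmaSqTerm_nonneg x) (sigmaSqTerm_le x)
    (hasSum_one_sixth_pow_div_four 0).summable

lemma tsum_sigmaSqTerm_add_le (x : ℝ) (n : ℕ) :
    ∑' k, sigmaSqTerm x (k + n) ≤ (1 / 6) ^ n / 20 :=
  hasSum_le (fun k => sigmaSqTerm_le x (k + n))
    ((summable_nat_add_iff n).mpr (summable_sigmaSqTerm x)).hasSum (hasSum_one_sixth_pow_div_four n)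

lemma sigmaSq_eq_sum_range_add_tsum (x : ℝ) (n : ℕ) :
    sigmaSq x = V (Int.fract x) (Int.fract x) +
      2 * (∑ k ∈ Finset.range n, sigmaSqTerm x k + ∑' k, sigmaSqTerm x (k + n)) := by
  rw [(summable_sigmaSqTerm x).sum_add_tsum_nat_add n]
  rfl

/-- The first six terms of `sigmaSq x` for `x ∈ [c, 34/81)`: on that interval none of `2^k x`,
`3^k x` (`k ≤ 5`) crosses an integer, so every fractional part is `x` times a constant minus a
fixed integer. -/
noncomputable def sigmaSqHead (x : ℝ) : ℝ :=
  V x x + 2 * (1 / 6 * V (2 * x) (3 * x - 1) + 1 / 36 * V (4 * x - 1) (9 * x - 3) +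
    1 / 216 * V (8 * x - 3) (27 * x - 11) + 1 / 1296 * V (16 * x - 6) (81 * x - 33) +
    1 / 7776 * V (32 * x - 13) (243 * x - 101))

lemma sigmaSq_eq_sigmaSqHead_add_tsum {x : ℝ} (h₁ : c ≤ x) (h₂ : x < 34 / 81) :
    sigmaSq x = sigmaSqHead x + 2 * ∑' k, sigmaSqTerm x (k + 5) := by
  unfold c at h₁
  have e1 : Int.fract x = x - (0 : ℤ) :=
    Int.fract_eq_sub_of_mem_Ico (by norm_num; constructor <;> linarith)
  have e2 : Int.fract (2 * x) = 2 * x - (0 : ℤ) :=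
    Int.fract_eq_sub_of_mem_Ico (by norm_num; constructor <;> linarith)
  have e3 : Int.fract (3 * x) = 3 * x - (1 : ℤ) :=
    Int.fract_eq_sub_of_mem_Ico (by norm_num; constructor <;> linarith)
  have e4 : Int.fract (4 * x) = 4 * x - (1 : ℤ) :=
    Int.fract_eq_sub_of_mem_Ico (by norm_num; constructor <;> linarith)
  have e9 : Int.fract (9 * x) = 9 * x - (3 : ℤ) :=
    Int.fract_eq_sub_of_mem_Ico (by norm_num; constructor <;> linarith)
  have e8 : Int.fract (8 * x) = 8 * x - (3 : ℤ) :=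
    Int.fract_eq_sub_of_mem_Ico (by norm_num; constructor <;> linarith)
  have e27 : Int.fract (27 * x) = 27 * x - (11 : ℤ) :=
    Int.fract_eq_sub_of_mem_Ico (by norm_num; constructor <;> linarith)
  have e16 : Int.fract (16 * x) = 16 * x - (6 : ℤ) :=
    Int.fract_eq_sub_of_mem_Ico (by norm_num; constructor <;> linarith)
  have e81 : Int.fract (81 * x) = 81 * x - (33 : ℤ) :=
    Int.fract_eq_sub_of_mem_Ico (by norm_num; constructor <;> linarith)
  have e32 : Int.fract (32 * x) = 32 * x - (13 : ℤ) :=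
    Int.fract_eq_sub_of_mem_Ico (by norm_num; constructor <;> linarith)
  have e243 : Int.fract (243 * x) = 243 * x - (101 : ℤ) :=
    Int.fract_eq_sub_of_mem_Ico (by norm_num; constructor <;> linarith)
  rw [sigmaSq_eq_sum_range_add_tsum x 5]
  simp only [Finset.sum_range_succ, Finset.sum_range_zero, sigmaSqTerm]
  norm_num [e1, e2, e3, e4, e9, e8, e27, e16, e81, e32, e243, sigmaSqHead]
  ring

lemma sigmaSqHead_add_lt {x : ℝ} (h₁ : 278 / 665 ≤ x) (h₂ : x < 34 / 81) :
    sigmaSqHead x + 2 * ((1 / 6) ^ 5 / 20) < sigmaSqHead c := by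
  have hc : sigmaSqHead c = 28804498 / 107460675 := by norm_num [sigmaSqHead, V, c]
  rw [hc, sigmaSqHead, V, V, V, V, V, V, min_self, min_eq_right (by linarith),
    min_eq_left (by linarith), min_eq_right (by linarith), min_eq_left (by linarith),
    min_eq_left (by linarith)]
  nlinarith [sq_nonneg (x - 278 / 665)]

theorem sigmaSq_lt_on_interval_14 (x : ℝ) (hx : x ∈ Set.Ico (278/665 : ℝ) (34/81)) :
    sigmaSq x < sigmaSq c := by
  obtain ⟨h₁, h₂⟩ := hx
  rw [sigmaSq_eq_sigmaSqHead_add_tsum (le_trans (by norm_num [c]) h₁) h₂,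
    sigmaSq_eq_sigmaSqHead_add_tsum le_rfl (by norm_num [c])]
  have head_lt := sigmaSqHead_add_lt h₁ h₂
  have tail_x := tsum_sigmaSqTerm_add_le x 5
  have tail_c : 0 ≤ ∑' k, sigmaSqTerm c (k + 5) := tsum_nonneg fun k => sigmaSqTerm_nonneg c _
  linarith
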